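/- (Threshold direct sum.) Let f be an n-bit partial function, let μ be a hard distribution for f, and consider a randomized algorithm run on an input to f^{⊕m} drawn from μ^{⊗m}. Say an instance x_i is solved if the positions of x_i queried by the algorithm form a certificate proving the value f(x_i). If the algorithm makes an expected T queries and solves an expected k of the m instances, then T ≥ k · R₀(f). -/

import Mathlib

/-!
Plant the input `x` of `f` as the `i`-th instance of `f^{⊕m}`, draw the other instances from `μ`,
and run the algorithm. Since resampling one coordinate of `μ^{⊗m}` from `μ` does not change its
law, averaging over `x ∼ μ`, the expected cost of this single-instance algorithm is the expected
number of queries into instance `i`, and its probability of querying a certificate for `x` is the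
probability that instance `i` is solved. So it suffices to treat one instance. An algorithm that
finds a certificate with probability `q` using `c` expected queries becomes a zero-error algorithm
by running a near-optimal one whenever it fails, and the hardness of `μ` gives
`R₀(f) ≤ c + (1 - q) R₀(f)`, that is `q R₀(f) ≤ c`. Summing over the instances gives
`k R₀(f) ≤ T`.
-/

/-! ### Decision trees -/

/-- A deterministic decision tree querying positions of type `ι`, receiving answers
in `α`, and producing an output in `β`. -/
inductive DTree (ι α β : Type) : Type
  | leaf (b : β) : DTree ι α β
  | node (i : ι) (next : α → DTree ι α β) : DTree ι α β

namespace DTree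

variable {ι α β : Type}

/-- The output of a decision tree on input `x`. -/
def output : DTree ι α β → (ι → α) → β
  | leaf b, _ => b
  | node i next, x => (next (x i)).output x

/-- The number of queries made by a decision tree on input `x`. -/
def cost : DTree ι α β → (ι → α) → ℕ
  | leaf _, _ => 0
  | node i next, x => (next (x i)).cost x + 1

/-- The set of positions queried by a decision tree on input `x`. -/
def queries : DTree ι α β → (ι → α) → Set ι
  | leaf _, _ => ∅
  | node i next, x => insert i ((next (x i)).queries x)

end DTree

/-- A partial function on inputs `ι → α` with outputs in `β`; `none` means undefined
(the domain is the set of inputs mapped to `some` value). -/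
abbrev PFn (ι α β : Type) := (ι → α) → Option β

/-- `t` computes the partial function `f` (correct on every input of the domain). -/
def DTree.computesP {ι α β : Type} (t : DTree ι α β) (f : PFn ι α β) : Prop :=
  ∀ x b, f x = some b → t.output x = b

/-- Deterministic query complexity `D(f)`. -/
noncomputable def Dq {ι α β : Type} (f : PFn ι α β) : ℝ :=
  sInf {T : ℝ | 0 ≤ T ∧ ∃ t : DTree ι α β, t.computesP f ∧ ∀ x, (t.cost x : ℝ) ≤ T}

/-! ### Randomized query algorithms -/

/-- A randomized query algorithm: a finitely supported probability distribution over
deterministic decision trees. -/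
structure RandAlg (ι α β : Type) where
  Ω : Type
  [fin : Fintype Ω]
  p : Ω → ℝ
  nonneg : ∀ ω, 0 ≤ p ω
  sum_one : ∑ ω, p ω = 1
  tree : Ω → DTree ι α β

namespace RandAlg

variable {ι α β : Type}

/-- Expected number of queries of `A` on input `x`. -/
noncomputable def expCost (A : RandAlg ι α β) (x : ι → α) : ℝ :=
  letI := A.fin
  ∑ ω, A.p ω * ((A.tree ω).cost x : ℝ)

open Classical in
/-- Probability that `A` outputs `b` on input `x`. -/
noncomputable def succProb (A : RandAlg ι α β) (x : ι → α) (b : β) : ℝ :=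
  letI := A.fin
  ∑ ω, if (A.tree ω).output x = b then A.p ω else 0

/-- `A` computes `f` with error at most `ε`: on every input of the domain the correct
output is produced with probability at least `1 - ε`. -/
def Computes (A : RandAlg ι α β) (f : PFn ι α β) (ε : ℝ) : Prop :=
  ∀ x b, f x = some b → 1 - ε ≤ A.succProb x b

/-- The worst-case cost of `A` (over all inputs and all trees in the support) is at most `T`. -/
def WCostLe (A : RandAlg ι α β) (T : ℝ) : Prop :=
  ∀ ω, A.p ω ≠ 0 → ∀ x, ((A.tree ω).cost x : ℝ) ≤ T

/-- The expected cost of `A` on every input of the domain of `f` is at most `T`. -/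
def ECostLe (A : RandAlg ι α β) (f : PFn ι α β) (T : ℝ) : Prop :=
  ∀ x, (f x).isSome → A.expCost x ≤ T

end RandAlg

/-- `R_ε(f)`: minimum worst-case cost of an `ε`-error randomized algorithm for `f`. -/
noncomputable def Rw {ι α β : Type} (ε : ℝ) (f : PFn ι α β) : ℝ :=
  sInf {T : ℝ | 0 ≤ T ∧ ∃ A : RandAlg ι α β, A.Computes f ε ∧ A.WCostLe T}

/-- `R̄_ε(f)`: minimum expected cost of an `ε`-error randomized algorithm for `f`. -/
noncomputable def Rbar {ι α β : Type} (ε : ℝ) (f : PFn ι α β) : ℝ :=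
  sInf {T : ℝ | 0 ≤ T ∧ ∃ A : RandAlg ι α β, A.Computes f ε ∧ A.ECostLe f T}

/-- `R₀(f)`: zero-error expected randomized query complexity. -/
noncomputable def R0 {ι α β : Type} (f : PFn ι α β) : ℝ := Rbar 0 f

/-- `R(f) := R_{1/3}(f)`: bounded-error randomized query complexity. -/
noncomputable def Rb {ι α β : Type} (f : PFn ι α β) : ℝ := Rw (1/3) f

/-- The total function `f` viewed as a partial function. -/
def tot {ι α β : Type} (f : (ι → α) → β) : PFn ι α β := fun x => some (f x)

/-! ### Direct sums, distributions, and certificates -/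

open Classical in
/-- The `m`-fold direct sum `f^{⊕m}`: given `m` independent inputs to `f`, output the
tuple of the `m` values of `f`. -/
noncomputable def dsum {ι α β : Type} (m : ℕ) (f : PFn ι α β) :
    PFn (Fin m × ι) α (Fin m → β) :=
  fun x =>
    if h : ∀ i : Fin m, (f fun j => x (i, j)).isSome then
      some fun i => (f fun j => x (i, j)).get (h i)
    else none

/-- A finitely supported probability distribution. -/
structure FinDist (γ : Type) where
  support : Finset γ
  p : γ → ℝ
  nonneg : ∀ z, 0 ≤ p z
  zero_off : ∀ z ∉ support, p z = 0
  sum_one : ∑ z ∈ support, p z = 1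

/-- `μ` is a hard distribution for `f` (as given by Yao's minimax theorem): it is
supported on the domain of `f` and every zero-error randomized algorithm for `f` makes
at least `R₀(f)` expected queries on inputs drawn from `μ`. -/
def IsHardDist {ι α β : Type} (μ : FinDist (ι → α)) (f : PFn ι α β) : Prop :=
  (∀ x ∈ μ.support, (f x).isSome) ∧
  ∀ A : RandAlg ι α β, A.Computes f 0 →
    R0 f ≤ ∑ x ∈ μ.support, μ.p x * A.expCost x

/-- `S` is a certificate for `f` at `x`: `x` is in the domain of `f` and the values of
`x` on `S` determine the value of `f` on every domain input consistent with them. -/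
def IsCert {ι α β : Type} (f : PFn ι α β) (S : Set ι) (x : ι → α) : Prop :=
  (f x).isSome ∧ ∀ y, (f y).isSome → (∀ i ∈ S, y i = x i) → f y = f x

/-- The tree `t`, run on the direct-sum input `z`, solves the `i`-th instance of `f` if
the positions of the `i`-th instance it queries form a certificate for that instance. -/
def SolvesInstance {m : ℕ} {ι α β γ : Type} (f : PFn ι α β)
    (t : DTree (Fin m × ι) α γ) (z : Fin m × ι → α) (i : Fin m) : Prop :=
  IsCert f {j | (i, j) ∈ t.queries z} fun j => z (i, j)

open Classical in
/-- The number of the `m` instances solved by `t` on the direct-sum input `z`. -/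
noncomputable def solvedCount {m : ℕ} {ι α β γ : Type} (f : PFn ι α β)
    (t : DTree (Fin m × ι) α γ) (z : Fin m × ι → α) : ℕ :=
  (Finset.univ.filter fun i : Fin m => SolvesInstance f t z i).card

/-- Expected number of instances of `f` solved by the randomized algorithm `A` on the
direct-sum input `z`. -/
noncomputable def RandAlg.expSolved {m : ℕ} {ι α β γ : Type}
    (A : RandAlg (Fin m × ι) α γ) (f : PFn ι α β) (z : Fin m × ι → α) : ℝ :=
  letI := A.fin
  ∑ ω, A.p ω * (solvedCount f (A.tree ω) z : ℝ)

open Classical in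
/-- Probability that the positions queried by `A` on `x` form a certificate for `f`. -/
noncomputable def RandAlg.certProb {ι α β γ : Type} (A : RandAlg ι α γ)
    (f : PFn ι α β) (x : ι → α) : ℝ :=
  letI := A.fin
  ∑ ω, if IsCert f ((A.tree ω).queries x) x then A.p ω else 0

namespace FinDist

variable {δ ε : Type}

noncomputable def expect (ν : FinDist δ) (g : δ → ℝ) : ℝ :=
  ∑ s ∈ ν.support, ν.p s * g s

theorem expect_mono (ν : FinDist δ) {g h : δ → ℝ} (hgh : ∀ s ∈ ν.support, g s ≤ h s) :
    ν.expect g ≤ ν.expect h :=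
  Finset.sum_le_sum fun s hs => mul_le_mul_of_nonneg_left (hgh s hs) (ν.nonneg s)

theorem expect_nonneg (ν : FinDist δ) {g : δ → ℝ} (hg : ∀ s, 0 ≤ g s) : 0 ≤ ν.expect g :=
  Finset.sum_nonneg fun s _ => mul_nonneg (ν.nonneg s) (hg s)

theorem expect_const (ν : FinDist δ) (c : ℝ) : ν.expect (fun _ => c) = c := by
  rw [expect, ← Finset.sum_mul, ν.sum_one, one_mul]

theorem expect_add (ν : FinDist δ) (g h : δ → ℝ) :
    ν.expect (fun s => g s + h s) = ν.expect g + ν.expect h := by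
  simp only [expect, mul_add, Finset.sum_add_distrib]

theorem expect_sub (ν : FinDist δ) (g h : δ → ℝ) :
    ν.expect (fun s => g s - h s) = ν.expect g - ν.expect h := by
  simp only [expect, mul_sub, Finset.sum_sub_distrib]

theorem expect_mul_const (ν : FinDist δ) (g : δ → ℝ) (c : ℝ) :
    ν.expect (fun s => g s * c) = ν.expect g * c := by
  simp only [expect, ← mul_assoc, Finset.sum_mul]

theorem expect_const_mul (ν : FinDist δ) (c : ℝ) (g : δ → ℝ) :
    ν.expect (fun s => c * g s) = c * ν.expect g := by
  simp only [mul_comm c, ν.expect_mul_const]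

theorem expect_sum {κ : Type} (ν : FinDist δ) (I : Finset κ) (g : κ → δ → ℝ) :
    ν.expect (fun s => ∑ i ∈ I, g i s) = ∑ i ∈ I, ν.expect (g i) := by
  simp only [expect, Finset.mul_sum]
  exact Finset.sum_comm

theorem expect_comm (ν : FinDist δ) (ν' : FinDist ε) (g : δ → ε → ℝ) :
    ν.expect (fun s => ν'.expect (g s)) = ν'.expect fun t => ν.expect fun s => g s t := by
  simp only [expect, Finset.mul_sum]
  rw [Finset.sum_comm]
  simp only [mul_left_comm]

noncomputable def pi (ν : FinDist δ) (m : ℕ) : FinDist (Fin m → δ) where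
  support := Fintype.piFinset fun _ => ν.support
  p t := ∏ i, ν.p (t i)
  nonneg t := Finset.prod_nonneg fun i _ => ν.nonneg (t i)
  zero_off t ht := by
    obtain ⟨i, hi⟩ := not_forall.1 (mt Fintype.mem_piFinset.2 ht)
    exact Finset.prod_eq_zero (Finset.mem_univ i) (ν.zero_off _ hi)
  sum_one := by rw [← Finset.prod_univ_sum, ν.sum_one, Finset.prod_const_one]

theorem p_mul_pi_p_update {m : ℕ} (ν : FinDist δ) (t : Fin m → δ) (i : Fin m) (x : δ) :
    ν.p x * (ν.pi m).p t = ν.p (t i) * (ν.pi m).p (Function.update t i x) := by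
  have hupd : ∀ j, ν.p (Function.update t i x j) = Function.update (ν.p ∘ t) i (ν.p x) j :=
    Function.apply_update (fun _ => ν.p) t i x
  simp only [pi, hupd, Finset.prod_update_of_mem (Finset.mem_univ i),
    Finset.prod_eq_mul_prod_sdiff_singleton_of_mem (Finset.mem_univ i) (fun j => ν.p (t j)),
    Function.comp_apply]
  ring

/-- `(x, t) ↦ (t i, update t i x)` is a weight-preserving involution of
`supp ν × supp ν^{⊗m}`. -/
theorem expect_expect_pi_update {m : ℕ} (ν : FinDist δ) (i : Fin m) (g : (Fin m → δ) → ℝ) :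
    ν.expect (fun x => (ν.pi m).expect fun t => g (Function.update t i x)) =
      (ν.pi m).expect g := by
  have hmem : ∀ p ∈ ν.support ×ˢ (ν.pi m).support,
      (p.2 i, Function.update p.2 i p.1) ∈ ν.support ×ˢ (ν.pi m).support := by
    rintro ⟨x, t⟩ hp
    obtain ⟨hx, ht⟩ := Finset.mem_product.1 hp
    have ht := Fintype.mem_piFinset.1 ht
    refine Finset.mem_product.2 ⟨ht i, Fintype.mem_piFinset.2 fun j => ?_⟩
    rcases eq_or_ne j i with rfl | hj
    · simpa using hx
    · simpa [Function.update_of_ne hj] using ht j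
  have hinv : ∀ p : δ × (Fin m → δ),
      ((Function.update p.2 i p.1) i, Function.update (Function.update p.2 i p.1) i (p.2 i)) =
        p := by
    rintro ⟨x, t⟩
    simp
  calc ν.expect (fun x => (ν.pi m).expect fun t => g (Function.update t i x))
      = ∑ p ∈ ν.support ×ˢ (ν.pi m).support,
          ν.p p.1 * (ν.pi m).p p.2 * g (Function.update p.2 i p.1) := by
        simp only [expect, Finset.sum_product, Finset.mul_sum, mul_assoc]
    _ = ∑ p ∈ ν.support ×ˢ (ν.pi m).support, ν.p p.1 * (ν.pi m).p p.2 * g p.2 := by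
        refine Finset.sum_nbij' (fun p => (p.2 i, Function.update p.2 i p.1))
          (fun p => (p.2 i, Function.update p.2 i p.1)) hmem hmem
          (fun p _ => hinv p) (fun p _ => hinv p) ?_
        rintro ⟨x, t⟩ -
        simp only [p_mul_pi_p_update ν t i x]
    _ = (ν.pi m).expect g := by
        simp only [expect, Finset.sum_product, mul_assoc, ← Finset.mul_sum, ← Finset.sum_mul,
          ν.sum_one, one_mul]

theorem expect_comm_pi_update {m : ℕ} (ν : FinDist δ) (ν' : FinDist ε) (i : Fin m)
    (g : ε → (Fin m → δ) → ℝ) :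
    ν.expect (fun x => ν'.expect fun ω => (ν.pi m).expect fun t => g ω (Function.update t i x)) =
      (ν.pi m).expect fun t => ν'.expect fun ω => g ω t := by
  rw [expect_comm]
  simp only [expect_expect_pi_update]
  rw [expect_comm]

end FinDist

namespace RandAlg

variable {ι α β γ : Type}

noncomputable def dist (A : RandAlg ι α β) : FinDist A.Ω :=
  letI := A.fin
  { support := Finset.univ
    p := A.p
    nonneg := A.nonneg
    zero_off := fun ω h => absurd (Finset.mem_univ ω) h
    sum_one := A.sum_one }

theorem expCost_eq_expect (A : RandAlg ι α β) (x : ι → α) :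
    A.expCost x = A.dist.expect fun ω => ((A.tree ω).cost x : ℝ) :=
  rfl

open Classical in
theorem certProb_eq_expect {β' : Type} (A : RandAlg ι α γ) (f : PFn ι α β') (x : ι → α) :
    A.certProb f x = A.dist.expect fun ω => if IsCert f ((A.tree ω).queries x) x then 1 else 0 := by
  simp only [certProb, FinDist.expect, dist, mul_ite, mul_one, mul_zero]

theorem certProb_nonneg {β' : Type} (A : RandAlg ι α γ) (f : PFn ι α β') (x : ι → α) :
    0 ≤ A.certProb f x := by
  rw [certProb_eq_expect]
  exact A.dist.expect_nonneg fun ω => by split_ifs <;> norm_num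

theorem certProb_le_one {β' : Type} (A : RandAlg ι α γ) (f : PFn ι α β') (x : ι → α) :
    A.certProb f x ≤ 1 := by
  rw [certProb_eq_expect]
  exact (A.dist.expect_mono fun ω _ => by split_ifs <;> norm_num).trans_eq (A.dist.expect_const 1)

theorem expCost_nonneg (A : RandAlg ι α β) (x : ι → α) : 0 ≤ A.expCost x :=
  A.dist.expect_nonneg fun _ => Nat.cast_nonneg _

theorem computes_zero_iff (A : RandAlg ι α β) (f : PFn ι α β) :
    A.Computes f 0 ↔ ∀ x b, f x = some b → ∀ ω, A.p ω ≠ 0 → (A.tree ω).output x = b := by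
  classical
  let := A.fin
  have hsucc : ∀ x b, 1 - A.succProb x b = ∑ ω, if (A.tree ω).output x = b then 0 else A.p ω := by
    intro x b
    rw [← A.sum_one, succProb, ← Finset.sum_sub_distrib]
    exact Finset.sum_congr rfl fun ω _ => by split_ifs <;> ring
  refine forall₂_congr fun x b => imp_congr_right fun _ => ?_
  have hterm : ∀ ω, 0 ≤ if (A.tree ω).output x = b then 0 else A.p ω := fun ω => by
    split_ifs; exacts [le_rfl, A.nonneg ω]
  rw [sub_zero, ← sub_nonpos, hsucc, (Finset.sum_nonneg fun ω _ => hterm ω).ge_iff_eq',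
    Finset.sum_eq_zero_iff_of_nonneg fun ω _ => hterm ω]
  refine forall_congr' fun ω => ?_
  split_ifs with h <;> simp [h]

noncomputable def seeded {ι' α' β' δ : Type} (A : RandAlg ι α β) (ν : FinDist δ)
    (F : δ → DTree ι α β → DTree ι' α' β') : RandAlg ι' α' β' :=
  letI := A.fin
  { Ω := A.Ω × ν.support
    p := fun ω => A.p ω.1 * ν.p ω.2
    nonneg := fun ω => mul_nonneg (A.nonneg ω.1) (ν.nonneg ω.2)
    sum_one := by
      simp only [Fintype.sum_prod_type, ← Finset.mul_sum,
        Finset.sum_coe_sort ν.support ν.p, ν.sum_one, mul_one, A.sum_one]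
    tree := fun ω => F ω.2 (A.tree ω.1) }

theorem expect_seeded {ι' α' β' δ : Type} (A : RandAlg ι α β) (ν : FinDist δ)
    (F : δ → DTree ι α β → DTree ι' α' β') (h : DTree ι' α' β' → ℝ) :
    (A.seeded ν F).dist.expect (fun ω => h ((A.seeded ν F).tree ω)) =
      A.dist.expect fun ω => ν.expect fun s => h (F s (A.tree ω)) := by
  let := A.fin
  change ∑ ω : A.Ω × ν.support, A.p ω.1 * ν.p ω.2 * h (F ω.2 (A.tree ω.1)) = _
  simp only [FinDist.expect, dist, Fintype.sum_prod_type, Finset.mul_sum, mul_assoc]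
  exact Finset.sum_congr rfl fun ω _ =>
    Finset.sum_coe_sort ν.support fun s => A.p ω * (ν.p s * h (F s (A.tree ω)))

end RandAlg

def AgreesWith {ι α : Type} (y : ι → α) (σ : ι → Option α) : Prop :=
  ∀ j a, σ j = some a → y j = a

theorem AgreesWith.update {ι α : Type} [DecidableEq ι] {y : ι → α} {σ : ι → Option α}
    (h : AgreesWith y σ) (j : ι) : AgreesWith y (Function.update σ j (some (y j))) := by
  intro k a hk
  rcases eq_or_ne k j with rfl | hkj
  · simpa using hk
  · exact h k a (by simpa [hkj] using hk)

namespace DTree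

variable {ι α β γ : Type} [DecidableEq ι]

open Classical in
/-- Run `t`, recording the answers in `σ`; at the leaf, output the value of `f` if the
recorded answers determine it, and otherwise run `fallback`. -/
noncomputable def certifyOr :
    DTree ι α γ → PFn ι α β → DTree ι α β → (ι → Option α) → DTree ι α β
  | leaf _, f, fallback, σ =>
    if h : ∃ b, ∀ y, (f y).isSome → AgreesWith y σ → f y = some b then leaf h.choose
    else fallback
  | node j next, f, fallback, σ =>
    node j fun a => (next a).certifyOr f fallback (Function.update σ j (some a))

theorem output_certifyOr (t : DTree ι α γ) (f : PFn ι α β) (fallback : DTree ι α β)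
    {σ : ι → Option α} {x : ι → α} {b : β} (hb : f x = some b) (hσ : AgreesWith x σ)
    (hfallback : fallback.output x = b) : (t.certifyOr f fallback σ).output x = b := by
  induction t generalizing σ with
  | leaf =>
    rw [certifyOr]
    split_ifs with h
    · simpa [output, hb] using (h.choose_spec x (by simp [hb]) hσ).symm
    · exact hfallback
  | node j next ih => exact ih (x j) (hσ.update j)

theorem setOf_isSome_update (σ : ι → Option α) (j : ι) (a : α) :
    {k | (Function.update σ j (some a) k).isSome} = insert j {k | (σ k).isSome} := by
  ext k
  rcases eq_or_ne k j with rfl | hkj <;> simp [*]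

open Classical in
theorem cost_certifyOr_le (t : DTree ι α γ) (f : PFn ι α β) (fallback : DTree ι α β)
    {σ : ι → Option α} {x : ι → α} (hσ : AgreesWith x σ) :
    (t.certifyOr f fallback σ).cost x ≤ t.cost x +
      if IsCert f ({j | (σ j).isSome} ∪ t.queries x) x then 0 else fallback.cost x := by
  induction t generalizing σ with
  | leaf =>
    have hdetermined : IsCert f {j | (σ j).isSome} x →
        ∃ b, ∀ y, (f y).isSome → AgreesWith y σ → f y = some b := by
      rintro ⟨hx, hcert⟩
      obtain ⟨b, hb⟩ := Option.isSome_iff_exists.1 hx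
      refine ⟨b, fun y hy hyσ => (hcert y hy fun j hj => ?_).trans hb⟩
      obtain ⟨a, ha⟩ := Option.isSome_iff_exists.1 hj
      rw [hyσ j a ha, hσ j a ha]
    simp only [certifyOr, queries, Set.union_empty, cost, zero_add]
    split_ifs with h <;> simp_all [cost]
  | node j next ih =>
    have := ih (x j) (hσ.update j)
    rw [setOf_isSome_update, Set.insert_union, ← Set.union_insert] at this
    rw [certifyOr, cost, cost, queries]
    omega

end DTree

namespace RandAlg

variable {ι α β γ : Type} [DecidableEq ι]

noncomputable def certifyOr (B : RandAlg ι α γ) (f : PFn ι α β) (A : RandAlg ι α β) :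
    RandAlg ι α β :=
  A.seeded B.dist fun ω t => (B.tree ω).certifyOr f t fun _ => none

theorem computes_certifyOr (B : RandAlg ι α γ) {f : PFn ι α β} {A : RandAlg ι α β}
    (hA : A.Computes f 0) : (B.certifyOr f A).Computes f 0 := by
  rw [computes_zero_iff] at hA ⊢
  rintro x b hb ⟨ω, s⟩ hp
  exact (B.tree s).output_certifyOr f _ hb (fun _ _ h => nomatch h)
    (hA x b hb ω (left_ne_zero_of_mul hp))

open Classical in
theorem expCost_certifyOr_le (B : RandAlg ι α γ) (f : PFn ι α β) (A : RandAlg ι α β)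
    (x : ι → α) :
    (B.certifyOr f A).expCost x ≤ B.expCost x + (1 - B.certProb f x) * A.expCost x := by
  have hstep : ∀ s t, (((B.tree s).certifyOr f t fun _ => none).cost x : ℝ) ≤
      (B.tree s).cost x + (1 - if IsCert f ((B.tree s).queries x) x then 1 else 0) * t.cost x := by
    intro s t
    have h := (B.tree s).cost_certifyOr_le f t (σ := fun _ => none) (x := x)
      (fun _ _ h => nomatch h)
    simp only [Option.isSome_none, Bool.false_eq_true, Set.ofPred_false, Set.empty_union] at h
    split_ifs at h ⊢ <;>
      simp only [add_zero, sub_self, sub_zero, zero_mul, one_mul] at h ⊢ <;> exact_mod_cast h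
  calc (B.certifyOr f A).expCost x
      = A.dist.expect fun ω => B.dist.expect fun s =>
          (((B.tree s).certifyOr f (A.tree ω) fun _ => none).cost x : ℝ) :=
        expect_seeded A B.dist _ fun t => (t.cost x : ℝ)
    _ ≤ A.dist.expect fun ω => B.dist.expect fun s => (B.tree s).cost x +
          (1 - if IsCert f ((B.tree s).queries x) x then 1 else 0) * (A.tree ω).cost x :=
        A.dist.expect_mono fun ω _ => B.dist.expect_mono fun s _ => hstep s (A.tree ω)
    _ = B.expCost x + (1 - B.certProb f x) * A.expCost x := by
        simp only [FinDist.expect_add, FinDist.expect_mul_const, FinDist.expect_sub,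
          FinDist.expect_const, FinDist.expect_const_mul, ← certProb_eq_expect,
          ← expCost_eq_expect]

end RandAlg

theorem IsHardDist.expect_certProb_mul_R0_le {ι α β γ : Type} {μ : FinDist (ι → α)}
    {f : PFn ι α β} (hμ : IsHardDist μ f) (B : RandAlg ι α γ) :
    μ.expect (B.certProb f) * R0 f ≤ μ.expect B.expCost := by
  classical
  set q := μ.expect (B.certProb f)
  set c := μ.expect B.expCost
  have hq0 : 0 ≤ q := μ.expect_nonneg (B.certProb_nonneg f)
  have hq1 : q ≤ 1 := (μ.expect_mono fun x _ => B.certProb_le_one f x).trans_eq (μ.expect_const 1)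
  have hc0 : 0 ≤ c := μ.expect_nonneg B.expCost_nonneg
  have hbound : ∀ (A : RandAlg ι α β) (T : ℝ), A.Computes f 0 → A.ECostLe f T →
      R0 f ≤ c + (1 - q) * T := fun A T hA hAT =>
    calc R0 f ≤ μ.expect (B.certifyOr f A).expCost := hμ.2 _ (B.computes_certifyOr hA)
      _ ≤ μ.expect fun x => B.expCost x + (1 - B.certProb f x) * T :=
        μ.expect_mono fun x hx => (B.expCost_certifyOr_le f A x).trans <|
          (add_le_add_iff_left _).2 <|
          mul_le_mul_of_nonneg_left (hAT x (hμ.1 x hx)) (sub_nonneg.2 (B.certProb_le_one f x))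
      _ = c + (1 - q) * T := by
        rw [μ.expect_add, μ.expect_mul_const (fun x => 1 - B.certProb f x), μ.expect_sub,
          μ.expect_const]
  by_cases hne : {T : ℝ | 0 ≤ T ∧ ∃ A : RandAlg ι α β, A.Computes f 0 ∧ A.ECostLe f T}.Nonempty
  · refine le_of_forall_pos_le_add fun ε hε => ?_
    obtain ⟨T, ⟨-, A, hA, hAT⟩, hT⟩ := Real.lt_sInf_add_pos hne hε
    have hR0T := hbound A T hA hAT
    change T < R0 f + ε at hT
    nlinarith
  · rw [R0, Rbar, Set.not_nonempty_iff_eq_empty.1 hne, Real.sInf_empty, mul_zero]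
    exact hc0

namespace DTree

variable {κ ι α γ : Type} [DecidableEq κ]

def costAt (i : κ) : DTree (κ × ι) α γ → (κ × ι → α) → ℕ
  | leaf _, _ => 0
  | node q next, z => (next (z q)).costAt i z + if q.1 = i then 1 else 0

theorem sum_costAt [Fintype κ] (t : DTree (κ × ι) α γ) (z : κ × ι → α) :
    ∑ i, t.costAt i z = t.cost z := by
  induction t with
  | leaf => simp [costAt, cost]
  | node q next ih => simp [costAt, cost, Finset.sum_add_distrib, ih]

def restrict (i : κ) (y : κ → ι → α) : DTree (κ × ι) α γ → DTree ι α γ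
  | leaf b => leaf b
  | node q next =>
    if q.1 = i then node q.2 fun a => (next a).restrict i y else (next (y q.1 q.2)).restrict i y

theorem cost_restrict (t : DTree (κ × ι) α γ) (i : κ) (y : κ → ι → α) (x : ι → α) :
    (t.restrict i y).cost x = t.costAt i (Function.uncurry (Function.update y i x)) := by
  induction t with
  | leaf => rfl
  | node q next ih =>
    obtain ⟨k, j⟩ := q
    rcases eq_or_ne k i with rfl | hk
    · simp [restrict, costAt, cost, ih]
    · simp [restrict, costAt, hk, ih]

theorem queries_restrict (t : DTree (κ × ι) α γ) (i : κ) (y : κ → ι → α) (x : ι → α) :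
    (t.restrict i y).queries x =
      {j | (i, j) ∈ t.queries (Function.uncurry (Function.update y i x))} := by
  induction t with
  | leaf => rfl
  | node q next ih =>
    obtain ⟨k, j⟩ := q
    rcases eq_or_ne k i with rfl | hk
    · ext; simp [restrict, queries, ih]
    · ext; simp [restrict, queries, hk, hk.symm, ih]

end DTree

theorem solvesInstance_uncurry_update_iff {m : ℕ} {ι α β γ : Type} (f : PFn ι α β)
    (t : DTree (Fin m × ι) α γ) (i : Fin m) (y : Fin m → ι → α) (x : ι → α) :
    SolvesInstance f t (Function.uncurry (Function.update y i x)) i ↔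
      IsCert f ((t.restrict i y).queries x) x := by
  simp [SolvesInstance, DTree.queries_restrict]

open Classical in
theorem solvedCount_eq_sum {m : ℕ} {ι α β γ : Type} (f : PFn ι α β)
    (t : DTree (Fin m × ι) α γ) (z : Fin m × ι → α) :
    (solvedCount f t z : ℝ) = ∑ i, if SolvesInstance f t z i then 1 else 0 := by
  rw [solvedCount, Finset.card_filter]
  push_cast
  rfl

namespace RandAlg

variable {m : ℕ} {ι α β γ : Type}

theorem expCost_eq_sum_costAt (A : RandAlg (Fin m × ι) α γ) (z : Fin m × ι → α) :
    A.expCost z = ∑ i, A.dist.expect fun ω => ((A.tree ω).costAt i z : ℝ) := by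
  simp only [expCost_eq_expect, ← FinDist.expect_sum, ← Nat.cast_sum, DTree.sum_costAt]

open Classical in
theorem expSolved_eq_sum (A : RandAlg (Fin m × ι) α γ) (f : PFn ι α β) (z : Fin m × ι → α) :
    A.expSolved f z =
      ∑ i, A.dist.expect fun ω => if SolvesInstance f (A.tree ω) z i then 1 else 0 := by
  simp only [← FinDist.expect_sum, ← solvedCount_eq_sum]
  rfl

noncomputable def embed (A : RandAlg (Fin m × ι) α γ) (μ : FinDist (ι → α)) (i : Fin m) :
    RandAlg ι α γ :=
  A.seeded (μ.pi m) fun y t => t.restrict i y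

theorem expect_expCost_embed (A : RandAlg (Fin m × ι) α γ) (μ : FinDist (ι → α)) (i : Fin m) :
    μ.expect (A.embed μ i).expCost = (μ.pi m).expect fun y =>
      A.dist.expect fun ω => ((A.tree ω).costAt i (Function.uncurry y) : ℝ) := by
  calc μ.expect (A.embed μ i).expCost
      = μ.expect fun x => A.dist.expect fun ω => (μ.pi m).expect fun y =>
          (((A.tree ω).restrict i y).cost x : ℝ) := by
        congr 1
        funext x
        exact expect_seeded A (μ.pi m) _ fun t => (t.cost x : ℝ)
    _ = _ := by
        simp only [DTree.cost_restrict]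
        exact μ.expect_comm_pi_update A.dist i fun ω y =>
          ((A.tree ω).costAt i (Function.uncurry y) : ℝ)

open Classical in
theorem expect_certProb_embed (A : RandAlg (Fin m × ι) α γ) (μ : FinDist (ι → α)) (i : Fin m)
    (f : PFn ι α β) :
    μ.expect ((A.embed μ i).certProb f) = (μ.pi m).expect fun y => A.dist.expect fun ω =>
      if SolvesInstance f (A.tree ω) (Function.uncurry y) i then 1 else 0 := by
  calc μ.expect ((A.embed μ i).certProb f)
      = μ.expect fun x => A.dist.expect fun ω => (μ.pi m).expect fun y =>
          if IsCert f (((A.tree ω).restrict i y).queries x) x then 1 else 0 := by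
        congr 1
        funext x
        rw [certProb_eq_expect]
        exact expect_seeded A (μ.pi m) _ fun t => if IsCert f (t.queries x) x then 1 else 0
    _ = _ := by
        simp only [← solvesInstance_uncurry_update_iff]
        exact μ.expect_comm_pi_update A.dist i fun ω y =>
          if SolvesInstance f (A.tree ω) (Function.uncurry y) i then 1 else 0

end RandAlg

/-- **Threshold direct sum theorem.** Let `μ` be a hard distribution for the `n`-bit
partial function `f`. Any randomized algorithm run on an input to `f^{⊕m}` drawn from
`μ^{⊗m}` that makes an expected `T` queries and solves (i.e., queries a certificate
for) an expected `k` of the `m` instances satisfies `T ≥ k · R₀(f)`. -/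
theorem threshold_direct_sum {n : ℕ} {β γ : Type} (f : PFn (Fin n) Bool β)
    (μ : FinDist (Fin n → Bool)) (hμ : IsHardDist μ f) (m : ℕ)
    (A : RandAlg (Fin m × Fin n) Bool γ) (T k : ℝ)
    (hT : T = ∑ t ∈ Fintype.piFinset (fun _ : Fin m => μ.support),
        (∏ i, μ.p (t i)) * A.expCost fun q => t q.1 q.2)
    (hk : k = ∑ t ∈ Fintype.piFinset (fun _ : Fin m => μ.support),
        (∏ i, μ.p (t i)) * A.expSolved f fun q => t q.1 q.2) :
    k * R0 f ≤ T := by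
  classical
  have hT' : T = (μ.pi m).expect fun y => A.expCost (Function.uncurry y) := hT
  have hk' : k = (μ.pi m).expect fun y => A.expSolved f (Function.uncurry y) := hk
  simp only [hT', hk', RandAlg.expCost_eq_sum_costAt, RandAlg.expSolved_eq_sum,
    FinDist.expect_sum, Finset.sum_mul]
  gcongr with i
  rw [← A.expect_certProb_embed, ← A.expect_expCost_embed]
  exact hμ.expect_certProb_mul_R0_le _
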